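/- arXiv:1105.1888 — 2 statements merged into one kernel-verified Lean document; each statement's English description precedes it below -/
import Mathlib

section
/- Let 1 ≤ h ≤ n, 0 ≤ m_2 ≤ m_1, 0 ≤ M_2 ≤ M_1, m_i < M_i for i = 1,2, and h·m_1 + (n−h)·m_2 ≤ a ≤ h·M_1 + (n−h)·M_2. Set a* = h·M_1 + (n−h)·m_2. If a ≥ a*, let k = ⌊(a − h(M_1 − M_2) − n·m_2)/(M_2 − m_2)⌋ and θ = a − ⟨M, s^k⟩ − ⟨m, v^{k+1}⟩ where M = M_1 s^h + M_2 v^h and m = m_1 s^h + m_2 v^h. Then the maximal element of S_a^[h] with respect to the majorization order is the vector whose first h components equal M_1, whose next k−h components equal M_2, whose (k+1)-st component equals θ, and whose last n−k−1 components equal m_2. -/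
/-! The floor `k` is exactly the number of slots that can be filled to their upper bounds
(`M1` on the first `h`, then `M2`) while the remaining mass `θ ∈ [m2, M2]` goes to slot `k` and
every later slot sits at its lower bound `m2`. Any `x ∈ S_a^[h]` therefore lies below this vector
before slot `k` and above it after slot `k`. With equal totals, such a single crossing gives the
majorization: heads before the crossing compare termwise, heads after it are the total minus
tails, which compare the other way. -/

open Finset

noncomputable section

/-- `sv n j` is the vector `s^j ∈ ℝ^n`: first `j` components equal `1`, the rest `0`. -/
def sv (n j : ℕ) : Fin n → ℝ := fun i => if (i : ℕ) < j then 1 else 0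

/-- `vv n j = s^n - s^j`: first `j` components equal `0`, the rest `1`. -/
def vv (n j : ℕ) : Fin n → ℝ := fun i => if (i : ℕ) < j then 0 else 1

/-- `ev n j` is the `j`-th standard basis vector (`j` counted from `1`). -/
def ev (n j : ℕ) : Fin n → ℝ := fun i => if (i : ℕ) + 1 = j then 1 else 0

/-- Standard inner product on `ℝ^n`. -/
def inn {n : ℕ} (x y : Fin n → ℝ) : ℝ := ∑ i, x i * y i

/-- Hadamard (componentwise) product. -/
def had {n : ℕ} (x y : Fin n → ℝ) : Fin n → ℝ := fun i => x i * y i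

/-- Sum of the first `k` components. -/
def psum {n : ℕ} (x : Fin n → ℝ) (k : ℕ) : ℝ := ∑ i : Fin n, if (i : ℕ) < k then x i else 0

/-- Majorization order: `x ⊴ y` (for vectors with nonincreasing components). -/
def Maj {n : ℕ} (x y : Fin n → ℝ) : Prop :=
  (∀ k : ℕ, 1 ≤ k → k ≤ n - 1 → psum x k ≤ psum y k) ∧ (∑ i, x i = ∑ i, y i)

/-- `Σ_a = {x ∈ ℝ^n : x_1 ≥ ... ≥ x_n ≥ 0, Σ x_i = a}`. -/
def SigmaSet (n : ℕ) (a : ℝ) : Set (Fin n → ℝ) :=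
  {x | (∀ i j : Fin n, i ≤ j → x j ≤ x i) ∧ (∀ i, 0 ≤ x i) ∧ (∑ i, x i = a)}

/-- `S_a^[h] = Σ_a ∩ {x : M₁ ≥ x_1 ≥ ... ≥ x_h ≥ m₁, M₂ ≥ x_{h+1} ≥ ... ≥ x_n ≥ m₂}`. -/
def Sh (n h : ℕ) (a M1 M2 m1 m2 : ℝ) : Set (Fin n → ℝ) :=
  SigmaSet n a ∩
    {x | (∀ i : Fin n, (i : ℕ) < h → m1 ≤ x i ∧ x i ≤ M1) ∧
         (∀ i : Fin n, h ≤ (i : ℕ) → m2 ≤ x i ∧ x i ≤ M2)}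

lemma floor_div_bounds {s d : ℝ} (hd : 0 < d) {k : ℕ} (hk : (k : ℤ) = ⌊s / d⌋) :
    k * d ≤ s ∧ s < (k + 1) * d := by
  obtain ⟨hle, hlt⟩ := Int.floor_eq_iff.mp hk.symm
  push_cast at hle hlt
  exact ⟨(le_div_iff₀ hd).mp hle, (div_lt_iff₀ hd).mp hlt⟩

lemma sum_sub_psum {n : ℕ} (x : Fin n → ℝ) (j : ℕ) :
    ∑ i, x i - psum x j = ∑ i : Fin n, if (i : ℕ) < j then 0 else x i := by
  rw [psum, ← Finset.sum_sub_distrib]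
  exact Finset.sum_congr rfl fun i _ => by split_ifs <;> ring

lemma maj_of_single_crossing {n : ℕ} {x y : Fin n → ℝ} (k : ℕ)
    (hlt : ∀ i : Fin n, (i : ℕ) < k → x i ≤ y i) (hgt : ∀ i : Fin n, k < (i : ℕ) → y i ≤ x i)
    (hsum : ∑ i, x i = ∑ i, y i) : Maj x y := by
  refine ⟨fun j _ _ => ?_, hsum⟩
  rcases le_or_gt j k with hjk | hkj
  · exact Finset.sum_le_sum fun i _ => by
      split_ifs with hij
      exacts [hlt i (hij.trans_le hjk), le_rfl]
  · have htail : (∑ i : Fin n, if (i : ℕ) < j then 0 else y i)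
        ≤ ∑ i : Fin n, if (i : ℕ) < j then 0 else x i :=
      Finset.sum_le_sum fun i _ => by
        split_ifs with hij
        exacts [le_rfl, hgt i (by omega)]
    rw [← sum_sub_psum, ← sum_sub_psum, hsum] at htail
    linarith

def stepVec (n h k : ℕ) (A B C D : ℝ) : Fin n → ℝ := fun i =>
  if (i : ℕ) < h then A else if (i : ℕ) < k then B else if (i : ℕ) = k then C else D

lemma sum_sv (n j : ℕ) : ∑ i, sv n j i = min n j := by
  simp [sv, Finset.sum_boole, Fin.card_filter_val_lt]

lemma sum_stepVec {n h k : ℕ} (hhk : h ≤ k) (A B C D : ℝ) :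
    ∑ i, stepVec n h k A B C D i
      = A * min n h + B * (min n k - min n h) + C * (min n (k + 1) - min n k)
        + D * (n - min n (k + 1)) := by
  have hpt : ∀ i, stepVec n h k A B C D i
      = A * sv n h i + B * (sv n k i - sv n h i) + C * (sv n (k + 1) i - sv n k i)
        + D * (1 - sv n (k + 1) i) := by
    intro i
    simp only [stepVec, sv]
    split_ifs <;> first | omega | ring
  simp only [hpt, Finset.sum_add_distrib, ← Finset.mul_sum, Finset.sum_sub_distrib, sum_sv,
    Finset.sum_const, Finset.card_univ, Fintype.card_fin, nsmul_eq_mul, mul_one]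

lemma inn_step_sv {n h k : ℕ} (hhk : h ≤ k) (c d : ℝ) :
    inn (fun i => c * sv n h i + d * vv n h i) (sv n k) = c * min n h + d * (min n k - min n h) :=
  calc _ = ∑ i, stepVec n h k c d 0 0 i :=
        Finset.sum_congr rfl fun i _ => by
          simp only [stepVec, sv, vv]
          split_ifs <;> first | omega | ring
    _ = _ := by rw [sum_stepVec hhk]; ring

lemma inn_step_vv {n h k : ℕ} (hhk : h ≤ k) (c d : ℝ) :
    inn (fun i => c * sv n h i + d * vv n h i) (vv n k) = d * (n - min n k) :=
  calc _ = ∑ i, stepVec n h k 0 0 d d i :=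
        Finset.sum_congr rfl fun i _ => by
          simp only [stepVec, sv, vv]
          split_ifs <;> first | omega | ring
    _ = _ := by rw [sum_stepVec hhk]; ring

lemma stepVec_mem_Sh {n h k : ℕ} {a m1 m2 M1 M2 θ : ℝ} (hm2 : 0 ≤ m2) (hM21 : M2 ≤ M1)
    (hmM1 : m1 ≤ M1) (hmM2 : m2 ≤ M2) (hθM2 : θ ≤ M2) (hθm2 : k < n → m2 ≤ θ)
    (hsum : ∑ i, stepVec n h k M1 M2 θ m2 i = a) :
    stepVec n h k M1 M2 θ m2 ∈ Sh n h a M1 M2 m1 m2 := by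
  refine ⟨⟨fun i j hij => ?_, fun i => ?_, hsum⟩, fun i hi => ?_, fun i hi => ?_⟩ <;>
    simp only [stepVec]
  · have : (i : ℕ) ≤ j := hij
    split_ifs <;> first | omega | linarith | linarith [hθm2 (by omega)]
  · split_ifs <;> first | omega | linarith | linarith [hθm2 (by omega)]
  · rw [if_pos hi]
    exact ⟨hmM1, le_rfl⟩
  · rw [if_neg (not_lt.mpr hi)]
    split_ifs with hik hik'
    exacts [⟨hmM2, le_rfl⟩, ⟨hθm2 (by omega), hθM2⟩, ⟨le_rfl, hmM2⟩]

lemma maj_stepVec_of_mem_Sh {n h k : ℕ} {a m1 m2 M1 M2 θ : ℝ} (hhk : h ≤ k)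
    (hsum : ∑ i, stepVec n h k M1 M2 θ m2 i = a) {x : Fin n → ℝ}
    (hx : x ∈ Sh n h a M1 M2 m1 m2) : Maj x (stepVec n h k M1 M2 θ m2) := by
  obtain ⟨⟨-, -, hxsum⟩, hxh, hxh'⟩ := hx
  refine maj_of_single_crossing k (fun i hik => ?_) (fun i hki => ?_) (hxsum.trans hsum.symm)
  · simp only [stepVec]
    split_ifs with hih
    exacts [(hxh i hih).2, (hxh' i (not_lt.mp hih)).2]
  · simp only [stepVec]
    rw [if_neg (by omega), if_neg (by omega), if_neg (by omega)]
    exact (hxh' i (by omega)).1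

theorem maximal_element_of_Sh_above_general (n h : ℕ) (hhn : h ≤ n)
    (a m1 m2 M1 M2 : ℝ)
    (hm2 : 0 ≤ m2) (hM21 : M2 ≤ M1)
    (hmM1 : m1 < M1) (hmM2 : m2 < M2)
    (haup : a ≤ h * M1 + (n - h : ℝ) * M2)
    (astar : ℝ) (hastar : astar = h * M1 + (n - h : ℝ) * m2)
    (hcase : astar ≤ a)
    (k : ℕ) (hk : (k : ℤ) = ⌊(a - h * (M1 - M2) - n * m2) / (M2 - m2)⌋)
    (Mv mv : Fin n → ℝ)
    (hMv : Mv = fun i => M1 * sv n h i + M2 * vv n h i)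
    (hmv : mv = fun i => m1 * sv n h i + m2 * vv n h i)
    (θ : ℝ) (hθ : θ = a - inn Mv (sv n k) - inn mv (vv n (k + 1)))
    (xstar : Fin n → ℝ)
    (hxstar : ∀ i : Fin n, xstar i =
      if (i : ℕ) < h then M1 else if (i : ℕ) < k then M2 else if (i : ℕ) = k then θ else m2) :
    xstar ∈ Sh n h a M1 M2 m1 m2 ∧ ∀ x ∈ Sh n h a M1 M2 m1 m2, Maj x xstar := by
  have hd : 0 < M2 - m2 := sub_pos.mpr hmM2
  obtain ⟨hks, hsk⟩ := floor_div_bounds hd hk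
  have hhk : h ≤ k := by
    have : (h : ℤ) ≤ k := hk ▸ Int.le_floor.mpr ((le_div_iff₀ hd).mpr (by push_cast; linarith))
    exact_mod_cast this
  have hkn : k ≤ n := by
    exact_mod_cast le_of_mul_le_mul_right (hks.trans (by linarith : _ ≤ (n : ℝ) * (M2 - m2))) hd
  have hθ_eq : θ = a - (h * M1 + (k - h) * M2) - m2 * (n - min n (k + 1)) := by
    rw [hθ, hMv, hmv, inn_step_sv hhk, inn_step_vv (by omega), min_eq_right hhn, min_eq_right hkn]
    push_cast
    ring
  obtain rfl : xstar = stepVec n h k M1 M2 θ m2 := funext hxstar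
  have hsum_eq := sum_stepVec (n := n) hhk M1 M2 θ m2
  rw [min_eq_right hhn, min_eq_right hkn] at hsum_eq
  -- for `k < n`, `θ - m2 = a - h (M1 - M2) - n m2 - k (M2 - m2)` is the remainder of the floor
  -- division; for `k = n`, `θ = 0`
  obtain ⟨hsum, hθM2, hθm2⟩ :
      ∑ i, stepVec n h k M1 M2 θ m2 i = a ∧ θ ≤ M2 ∧ (k < n → m2 ≤ θ) := by
    rcases hkn.lt_or_eq with hkn | rfl
    · rw [min_eq_right hkn] at hθ_eq hsum_eq
      push_cast at hθ_eq hsum_eq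
      exact ⟨by linarith, by linarith, fun _ => by linarith⟩
    · rw [min_eq_left (Nat.le_succ k)] at hθ_eq hsum_eq
      simp only [sub_self, mul_zero, add_zero] at hθ_eq hsum_eq
      exact ⟨by linarith, by linarith, fun hlt => absurd hlt (lt_irrefl k)⟩
  exact ⟨stepVec_mem_Sh hm2 hM21 hmM1.le hmM2.le hθM2 hθm2 hsum,
    fun x => maj_stepVec_of_mem_Sh hhk hsum⟩

/-- Corollary 3 (case `a ≥ a*`): the maximal element of `S_a^[h]`. -/
theorem maximal_element_of_Sh_above (n h : ℕ) (hh : 1 ≤ h) (hhn : h ≤ n)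
    (a m1 m2 M1 M2 : ℝ) (ha : 0 < a)
    (hm2 : 0 ≤ m2) (hm21 : m2 ≤ m1) (hM2 : 0 ≤ M2) (hM21 : M2 ≤ M1)
    (hmM1 : m1 < M1) (hmM2 : m2 < M2)
    (halow : h * m1 + (n - h : ℝ) * m2 ≤ a) (haup : a ≤ h * M1 + (n - h : ℝ) * M2)
    (astar : ℝ) (hastar : astar = h * M1 + (n - h : ℝ) * m2)
    (hcase : astar ≤ a)
    (k : ℕ) (hk : (k : ℤ) = ⌊(a - h * (M1 - M2) - n * m2) / (M2 - m2)⌋)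
    (Mv mv : Fin n → ℝ)
    (hMv : Mv = fun i => M1 * sv n h i + M2 * vv n h i)
    (hmv : mv = fun i => m1 * sv n h i + m2 * vv n h i)
    (θ : ℝ) (hθ : θ = a - inn Mv (sv n k) - inn mv (vv n (k + 1)))
    (xstar : Fin n → ℝ)
    (hxstar : ∀ i : Fin n, xstar i =
      if (i : ℕ) < h then M1 else if (i : ℕ) < k then M2 else if (i : ℕ) = k then θ else m2) :
    xstar ∈ Sh n h a M1 M2 m1 m2 ∧ ∀ x ∈ Sh n h a M1 M2 m1 m2, Maj x xstar :=
  maximal_element_of_Sh_above_general n h hhn a m1 m2 M1 M2 hm2 hM21 hmM1 hmM2 haup astar hastar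
    hcase k hk Mv mv hMv hmv θ hθ xstar hxstar
end
end

section
/- Let k ≥ 2 and r ≥ 1 with rk − 2r + 2 ≥ 1, and let T be any tree with degree sequence consisting of r vertices of degree k and rk − 2r + 2 vertices of degree 1. Then the second Zagreb index of T equals S(T) = k(2kr − 2r − k + 2). -/
open Finset

noncomputable section

/-- Degree of a vertex (with classical decidability of adjacency). -/
def deg {V : Type*} [Fintype V] (G : SimpleGraph V) (v : V) : ℕ :=
  letI := Classical.decEq V
  letI := Classical.decRel G.Adj
  G.degree v

/-- The finite set of edges of `G`. -/
def edgeF {V : Type*} [Fintype V] (G : SimpleGraph V) : Finset (Sym2 V) :=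
  letI := Classical.decEq V
  letI := Classical.decRel G.Adj
  G.edgeFinset

/-- Sum of the degrees of the two endpoints of an edge. -/
def dsum {V : Type*} [Fintype V] (G : SimpleGraph V) : Sym2 V → ℝ :=
  Sym2.lift ⟨fun u v => (deg G u : ℝ) + deg G v, fun u v => by ring⟩

/-- Product of the degrees of the two endpoints of an edge. -/
def dprod {V : Type*} [Fintype V] (G : SimpleGraph V) : Sym2 V → ℝ :=
  Sym2.lift ⟨fun u v => (deg G u : ℝ) * deg G v, fun u v => by ring⟩

/-- The second Zagreb index `S(G) = Σ_{(v_i,v_j) ∈ E} d_i d_j`. -/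
def zagreb2 {V : Type*} [Fintype V] (G : SimpleGraph V) : ℝ :=
  ∑ e ∈ edgeF G, dprod G e

/-! Every edge of such a tree has an endpoint of degree `k`, since an edge joining two leaves
would be a whole connected component. Hence `d_u d_v = k (d_u + d_v) - k²` on every edge, and
summing over the edges with `Σ_{uv ∈ E} (d_u + d_v) = Σ_v d_v²` and `|E| = |V| - 1` turns
`S(T)` into a function of the two vertex counts. -/

namespace Finset

theorem sum_comp_of_forall_eq_or_eq {α β M : Type*} [AddCommMonoid M] [DecidableEq β]
    (s : Finset α) (f : α → β) (g : β → M) {b c : β} (hbc : b ≠ c)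
    (hf : ∀ a ∈ s, f a = b ∨ f a = c) :
    ∑ a ∈ s, g (f a) = #{a ∈ s | f a = b} • g b + #{a ∈ s | f a = c} • g c := by
  rw [sum_comp, ← sum_pair (f := fun y => #{a ∈ s | f a = y} • g y) hbc]
  refine sum_subset (fun y hy => ?_) fun y _ hy => ?_
  · obtain ⟨a, ha, rfl⟩ := mem_image.mp hy
    simpa using hf a ha
  · rw [card_eq_zero.mpr (filter_eq_empty_iff.mpr fun a ha (hfa : f a = y) =>
      hy (hfa ▸ mem_image_of_mem f ha)), zero_smul]

end Finset

namespace SimpleGraph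

variable {V : Type*} {G : SimpleGraph V}

theorem Connected.eq_or_eq_of_adj_of_degree_eq_one (hG : G.Connected) {u v : V}
    [Fintype (G.neighborSet u)] [Fintype (G.neighborSet v)] (huv : G.Adj u v)
    (hu : G.degree u = 1) (hv : G.degree v = 1) (w : V) : w = u ∨ w = v := by
  obtain ⟨_, _, hu⟩ := degree_eq_one_iff_existsUnique_adj.mp hu
  obtain ⟨_, _, hv⟩ := degree_eq_one_iff_existsUnique_adj.mp hv
  have closed : ∀ {a b : V}, G.Walk a b → a = u ∨ a = v → b = u ∨ b = v := by
    intro a b p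
    induction p with
    | nil => exact id
    | cons hadj _ ih =>
      rintro (rfl | rfl)
      · exact ih (.inr ((hu _ hadj).trans (hu _ huv).symm))
      · exact ih (.inl ((hv _ hadj).trans (hv _ huv.symm).symm))
  exact closed (hG.preconnected u w).some (.inl rfl)

variable [Fintype V] [DecidableEq V] [DecidableRel G.Adj]

theorem sum_edgeFinset_lift_add {M : Type*} [AddCommMonoid M] (f : V → M) :
    ∑ e ∈ G.edgeFinset, Sym2.lift ⟨fun u v => f u + f v, fun _ _ => add_comm _ _⟩ e =
      ∑ v, G.degree v • f v := by
  have hedge : ∀ e ∈ G.edgeFinset, ∑ d ∈ (univ : Finset G.Dart) with d.edge = e, f d.fst =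
      Sym2.lift ⟨fun u v => f u + f v, fun _ _ => add_comm _ _⟩ e := by
    intro e he
    induction e using Sym2.ind with | _ u v => ?_
    let d : G.Dart := ⟨(u, v), mem_edgeFinset.mp he⟩
    rw [← show d.edge = s(u, v) from rfl, d.edge_fiber, sum_pair d.symm_ne.symm]
    rfl
  have hvert : ∀ v, ∑ d ∈ (univ : Finset G.Dart) with d.fst = v, f v = G.degree v • f v :=
    fun v => by rw [sum_const, dart_fst_fiber_card_eq_degree]
  rw [← sum_congr rfl hedge, sum_fiberwise_of_maps_to fun d _ => mem_edgeFinset.mpr d.edge_mem,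
    ← sum_congr rfl fun v _ => hvert v, sum_fiberwise']

end SimpleGraph

section

variable {V : Type*} [Fintype V] (G : SimpleGraph V)

theorem deg_eq_degree [DecidableRel G.Adj] (v : V) : deg G v = G.degree v := by
  unfold deg; congr!

theorem edgeF_eq_edgeFinset [DecidableEq V] [DecidableRel G.Adj] : edgeF G = G.edgeFinset := by
  unfold edgeF; congr!

theorem sum_dsum_edgeF : ∑ e ∈ edgeF G, dsum G e = ∑ v, (deg G v : ℝ) * deg G v := by
  classical
  rw [edgeF_eq_edgeFinset]
  refine (G.sum_edgeFinset_lift_add fun v => (deg G v : ℝ)).trans (sum_congr rfl fun v _ => ?_)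
  rw [nsmul_eq_mul, deg_eq_degree]

variable {G} {k : ℕ}

theorem dprod_eq_mul_dsum_sub (hG : G.Connected)
    (hdegs : ∀ v, deg G v = k ∨ deg G v = 1) {w : V} (hw : deg G w = k) {e : Sym2 V}
    (he : e ∈ edgeF G) : dprod G e = k * dsum G e - k ^ 2 := by
  classical
  rw [edgeF_eq_edgeFinset, SimpleGraph.mem_edgeFinset] at he
  induction e using Sym2.ind with | _ u v => ?_
  have hend : deg G u = k ∨ deg G v = k := by
    by_contra! h
    have hu := (hdegs u).resolve_left h.1
    have hv := (hdegs v).resolve_left h.2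
    rw [deg_eq_degree] at hu hv
    rcases hG.eq_or_eq_of_adj_of_degree_eq_one he hu hv w with rfl | rfl
    · exact h.1 hw
    · exact h.2 hw
  simp only [dprod, dsum, Sym2.lift_mk]
  rcases hend with h | h <;> rw [h] <;> ring

theorem zagreb2_eq_mul_sum_sq_sub (hG : G.Connected)
    (hdegs : ∀ v, deg G v = k ∨ deg G v = 1) {w : V} (hw : deg G w = k) :
    zagreb2 G = k * ∑ v, (deg G v : ℝ) * deg G v - k ^ 2 * #(edgeF G) := by
  rw [zagreb2, sum_congr rfl fun e he => dprod_eq_mul_dsum_sub hG hdegs hw he,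
    sum_sub_distrib, ← mul_sum, sum_dsum_edgeF, sum_const, nsmul_eq_mul]
  ring

end

theorem zagreb2_of_tree_regular_plus_pendants_general {V : Type*} [Fintype V]
    (T : SimpleGraph V) (hT : T.IsTree)
    (k r : ℕ) (hk : 2 ≤ k) (hr : 1 ≤ r)
    (hdegs : ∀ v : V, deg T v = k ∨ deg T v = 1)
    (hck : (Finset.univ.filter fun v => deg T v = k).card = r)
    (hc1 : (Finset.univ.filter fun v => deg T v = 1).card = r * k - 2 * r + 2) :
    zagreb2 T = (k : ℝ) * (2 * k * r - 2 * r - k + 2) := by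
  classical
  obtain ⟨w, -, hw⟩ := filter_nonempty_iff.mp (card_pos.mp (hck ▸ hr))
  have hk1 : k ≠ 1 := by omega
  have hsq := sum_comp_of_forall_eq_or_eq univ (deg T) (fun d => (d : ℝ) * d) hk1
    fun v _ => hdegs v
  have hvertices := sum_comp_of_forall_eq_or_eq univ (deg T) (fun _ => (1 : ℝ)) hk1
    fun v _ => hdegs v
  rw [hck, hc1] at hsq hvertices
  have hedges : (#(edgeF T) : ℝ) + 1 = Fintype.card V := by
    rw [edgeF_eq_edgeFinset]; exact_mod_cast hT.card_edgeFinset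
  have hleaves : ((r * k - 2 * r + 2 : ℕ) : ℝ) = r * k - 2 * r + 2 := by
    have : 2 * r ≤ r * k := by nlinarith
    push_cast [this]; ring
  simp only [sum_const, card_univ, nsmul_eq_mul, mul_one] at hsq hvertices
  rw [zagreb2_eq_mul_sum_sq_sub hT.connected hdegs hw]
  linear_combination k * hsq - k ^ 2 * hedges - k ^ 2 * hvertices + (k - k ^ 2) * hleaves

/-- Any tree with `r` vertices of degree `k` and `rk - 2r + 2` vertices of degree `1`
has second Zagreb index `k(2kr - 2r - k + 2)`. -/
theorem zagreb2_of_tree_regular_plus_pendants {V : Type*} [Fintype V]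
    (T : SimpleGraph V) (hT : T.IsTree)
    (k r : ℕ) (hk : 2 ≤ k) (hr : 1 ≤ r) (hpos : 1 ≤ r * k - 2 * r + 2)
    (hdegs : ∀ v : V, deg T v = k ∨ deg T v = 1)
    (hck : (Finset.univ.filter fun v => deg T v = k).card = r)
    (hc1 : (Finset.univ.filter fun v => deg T v = 1).card = r * k - 2 * r + 2) :
    zagreb2 T = (k : ℝ) * (2 * k * r - 2 * r - k + 2) :=
  zagreb2_of_tree_regular_plus_pendants_general T hT k r hk hr hdegs hck hc1
end
end
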